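/- arXiv:math/0410164 — 2 statements merged into one kernel-verified Lean document; each statement's English description precedes it below -/
import Mathlib

section
/- Let ν₁, ν₂ be finite nonnegative measures on ℝ, let M > 0, and define the truncation ν^M = (min(ν(ℝ), M)/ν(ℝ)) · ν (with ν^M = 0 if ν = 0). Then for every bounded 1-Lipschitz function g with |g| ≤ 1, |∫ g dν₁^M − ∫ g dν₂^M| ≤ 3 ρ(ν₁, ν₂), where ρ(ν₁, ν₂) = sup over such g of |∫ g dν₁ − ∫ g dν₂|. -/
/-!
Write `aᵢ = νᵢ(ℝ)`, `cᵢ = min(aᵢ, M)/aᵢ` and `Iᵢ = ∫ g dνᵢ`, so that `∫ g dνᵢ^M = cᵢ Iᵢ`. Testing `ρ`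
against `g` and against the constant `1` gives `|I₁ - I₂| ≤ ρ` and `|a₁ - a₂| ≤ ρ`. Then
`c₁ I₁ - c₂ I₂ = c₁ (I₁ - I₂) + (c₁ - c₂) I₂` with `c₁ ≤ 1` and `|I₂| ≤ a₂`, and since `cᵢ aᵢ = min(aᵢ, M)`,
`(c₁ - c₂) a₂ = c₁ (a₂ - a₁) + (min(a₁, M) - min(a₂, M))` has absolute value at most `2 |a₁ - a₂|`.
-/

open MeasureTheory Real

/-- The truncation of a finite measure `ν` at total mass `M`:
`ν^M = (min(ν(ℝ), M)/ν(ℝ)) · ν` (with `ν^M = 0` if `ν = 0`). -/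
noncomputable def truncMeasure (ν : Measure ℝ) (M : ℝ) : Measure ℝ :=
  (ENNReal.ofReal (min (ν Set.univ).toReal M / (ν Set.univ).toReal)) • ν

noncomputable def truncScale (a M : ℝ) : ℝ := min a M / a

section truncScale

variable {a a₁ a₂ M : ℝ}

lemma truncScale_nonneg (ha : 0 ≤ a) (hM : 0 ≤ M) : 0 ≤ truncScale a M :=
  div_nonneg (le_min ha hM) ha

lemma truncScale_le_one (ha : 0 ≤ a) : truncScale a M ≤ 1 :=
  div_le_one_of_le₀ (min_le_left _ _) ha

lemma truncScale_mul_self (hM : 0 ≤ M) : truncScale a M * a = min a M := by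
  rcases eq_or_ne a 0 with rfl | ha
  · simp [hM]
  · exact div_mul_cancel₀ _ ha

lemma abs_truncScale_sub_mul_le (ha₁ : 0 ≤ a₁) (hM : 0 ≤ M) :
    |(truncScale a₁ M - truncScale a₂ M) * a₂| ≤ 2 * |a₁ - a₂| := by
  have hmin : |min a₁ M - min a₂ M| ≤ |a₁ - a₂| := by
    simpa using abs_min_sub_min_le_max a₁ M a₂ M
  calc |(truncScale a₁ M - truncScale a₂ M) * a₂|
      = |truncScale a₁ M * (a₂ - a₁) + (min a₁ M - min a₂ M)| := by
        rw [← truncScale_mul_self hM, ← truncScale_mul_self hM]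
        ring_nf
    _ ≤ |truncScale a₁ M * (a₂ - a₁)| + |min a₁ M - min a₂ M| := abs_add_le _ _
    _ ≤ 1 * |a₁ - a₂| + |a₁ - a₂| := by
        rw [abs_mul, abs_of_nonneg (truncScale_nonneg ha₁ hM), abs_sub_comm a₂]
        gcongr
        exact truncScale_le_one ha₁
    _ = 2 * |a₁ - a₂| := by ring

lemma abs_truncScale_mul_sub_le (ha₁ : 0 ≤ a₁) (ha₂ : 0 ≤ a₂) (hM : 0 ≤ M) {I₁ I₂ : ℝ}
    (hI₂ : |I₂| ≤ a₂) :
    |truncScale a₁ M * I₁ - truncScale a₂ M * I₂| ≤ |I₁ - I₂| + 2 * |a₁ - a₂| :=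
  calc |truncScale a₁ M * I₁ - truncScale a₂ M * I₂|
      = |truncScale a₁ M * (I₁ - I₂) + (truncScale a₁ M - truncScale a₂ M) * I₂| := by ring_nf
    _ ≤ |truncScale a₁ M * (I₁ - I₂)| + |(truncScale a₁ M - truncScale a₂ M) * I₂| :=
        abs_add_le _ _
    _ ≤ 1 * |I₁ - I₂| + |(truncScale a₁ M - truncScale a₂ M) * a₂| := by
        rw [abs_mul, abs_mul, abs_mul, abs_of_nonneg (truncScale_nonneg ha₁ hM),
          abs_of_nonneg ha₂]
        gcongr
        exact truncScale_le_one ha₁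
    _ ≤ |I₁ - I₂| + 2 * |a₁ - a₂| := by
        rw [one_mul]
        gcongr
        exact abs_truncScale_sub_mul_le ha₁ hM

end truncScale

lemma integral_truncMeasure (ν : Measure ℝ) {M : ℝ} (hM : 0 ≤ M) (f : ℝ → ℝ) :
    ∫ x, f x ∂(truncMeasure ν M) = truncScale (ν.real Set.univ) M * ∫ x, f x ∂ν := by
  rw [truncMeasure, integral_smul_measure, ENNReal.toReal_ofReal, smul_eq_mul]
  · rfl
  · exact truncScale_nonneg measureReal_nonneg hM

theorem truncation_bounded_lipschitz_estimate_general
    (ν₁ ν₂ : Measure ℝ) [IsFiniteMeasure ν₂]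
    (M : ℝ) (hM : 0 < M) (ρ : ℝ)
    (hρ : ∀ g : ℝ → ℝ, Continuous g → (∀ x, |g x| ≤ 1) → LipschitzWith 1 g →
      |∫ x, g x ∂ν₁ - ∫ x, g x ∂ν₂| ≤ ρ)
    (g : ℝ → ℝ) (hgc : Continuous g) (hgb : ∀ x, |g x| ≤ 1)
    (hgl : LipschitzWith 1 g) :
    |∫ x, g x ∂(truncMeasure ν₁ M) - ∫ x, g x ∂(truncMeasure ν₂ M)| ≤ 3 * ρ := by
  have hmass : |ν₁.real Set.univ - ν₂.real Set.univ| ≤ ρ := by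
    simpa using hρ (fun _ ↦ 1) continuous_const (by simp)
      ((LipschitzWith.const 1).weaken zero_le_one)
  have hI₂ : |∫ x, g x ∂ν₂| ≤ ν₂.real Set.univ := by
    simpa using norm_integral_le_of_norm_le_const (μ := ν₂) (C := 1) (f := g)
      (.of_forall hgb)
  rw [integral_truncMeasure ν₁ hM.le, integral_truncMeasure ν₂ hM.le]
  calc _ ≤ |∫ x, g x ∂ν₁ - ∫ x, g x ∂ν₂| + 2 * |ν₁.real Set.univ - ν₂.real Set.univ| :=
        abs_truncScale_mul_sub_le measureReal_nonneg measureReal_nonneg hM.le hI₂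
    _ ≤ 3 * ρ := by linarith [hρ g hgc hgb hgl]

/-- If `ρ` bounds `|∫ g dν₁ − ∫ g dν₂|` over all continuous `g` with `|g| ≤ 1` and
Lipschitz constant `1`, then the truncated measures at level `M` satisfy
`|∫ g dν₁^M − ∫ g dν₂^M| ≤ 3ρ` for all such `g`. -/
theorem truncation_bounded_lipschitz_estimate
    (ν₁ ν₂ : Measure ℝ) [IsFiniteMeasure ν₁] [IsFiniteMeasure ν₂]
    (M : ℝ) (hM : 0 < M) (ρ : ℝ)
    (hρ : ∀ g : ℝ → ℝ, Continuous g → (∀ x, |g x| ≤ 1) → LipschitzWith 1 g →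
      |∫ x, g x ∂ν₁ - ∫ x, g x ∂ν₂| ≤ ρ)
    (g : ℝ → ℝ) (hgc : Continuous g) (hgb : ∀ x, |g x| ≤ 1)
    (hgl : LipschitzWith 1 g) :
    |∫ x, g x ∂(truncMeasure ν₁ M) - ∫ x, g x ∂(truncMeasure ν₂ M)| ≤ 3 * ρ :=
  truncation_bounded_lipschitz_estimate_general ν₁ ν₂ M hM ρ hρ g hgc hgb hgl
end

section
/- Let {N(x) : x ∈ ℝ} be a real-valued random field and suppose there exist α > 0, p > 1 and K such that E|N(x) − N(y)|^p ≤ K|x − y|^{1+α} for all x, y. Then for every λ > 0, E[sup_{x ∈ ℝ} |N(x)|^p e^{−λ|x|}] < ∞, provided E|N(0)|^p < ∞. -/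
/-
On a unit interval `[a, a + 1)` a continuous path is controlled by its dyadic oscillations:
`edist (f a) (f x) ≤ ∑ⱼ Dⱼ`, where `Dⱼ` is the largest increment of `f` over the `2 ^ j` dyadic
subintervals of level `j` (chain `x` through its dyadic approximations). Bounding a maximum by
a sum, `E Dⱼ ^ p ≤ 2 ^ j K 2 ^ (-j (1 + α)) = K 2 ^ (-j α)`, so by Minkowski's inequality for
series the `Lᵖ` norm of `∑ⱼ Dⱼ` is at most a geometric series, uniformly in `a`. Together with
`E |N n| ^ p ≲ E |N 0| ^ p + K |n| ^ (1 + α)` this gives a bound on `E sup_{[n, n+1)} |N| ^ p`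
growing polynomially in `n`, which the weights `exp (-λ |n|)` make summable over `n ∈ ℤ`.
-/

open MeasureTheory Real Filter Set Topology ProbabilityTheory
open scoped ENNReal NNReal

section Lp

variable {α : Type*} [MeasurableSpace α] {μ : Measure α} {p : ℝ}

theorem lintegral_add_rpow_le {f g : α → ℝ≥0∞} (hg : AEMeasurable g μ) (hp : 1 ≤ p) :
    ∫⁻ a, (f a + g a) ^ p ∂μ ≤ 2 ^ (p - 1) * (∫⁻ a, f a ^ p ∂μ + ∫⁻ a, g a ^ p ∂μ) := by
  calc ∫⁻ a, (f a + g a) ^ p ∂μ ≤ ∫⁻ a, 2 ^ (p - 1) * (f a ^ p + g a ^ p) ∂μ :=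
        lintegral_mono fun a => ENNReal.rpow_add_le_mul_rpow_add_rpow _ _ hp
    _ = _ := by
        rw [lintegral_const_mul' _ _ (by simp), lintegral_add_right' _ (hg.pow_const p)]

theorem lintegral_tsum_rpow_le {g : ℕ → α → ℝ≥0∞} (hg : ∀ j, AEMeasurable (g j) μ)
    (hp : 1 ≤ p) :
    ∫⁻ a, (∑' j, g j a) ^ p ∂μ ≤ (∑' j, (∫⁻ a, g j a ^ p ∂μ) ^ (1 / p)) ^ p := by
  have hp0 : 0 < p := by linarith
  have hpartial : ∀ n, ∫⁻ a, (∑ j ∈ Finset.range n, g j a) ^ p ∂μ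
      ≤ (∑' j, (∫⁻ a, g j a ^ p ∂μ) ^ (1 / p)) ^ p := by
    intro n
    rw [← ENNReal.rpow_inv_le_iff hp0, ← one_div]
    have hmink := Finset.le_sum_of_subadditive_on_pred
      (fun F : α → ℝ≥0∞ => (∫⁻ a, F a ^ p ∂μ) ^ (1 / p)) (AEMeasurable · μ)
      (by simp [ENNReal.zero_rpow_of_pos hp0, hp0])
      (fun F G hF hG => ENNReal.lintegral_Lp_add_le hF hG hp) (fun _ _ hF hG => hF.add hG)
      g (s := Finset.range n) (fun j _ => hg j)
    simp only [Finset.sum_apply] at hmink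
    exact hmink.trans (ENNReal.sum_le_tsum _)
  have hsup : ∀ a, (∑' j, g j a) ^ p = ⨆ n, (∑ j ∈ Finset.range n, g j a) ^ p := fun a => by
    rw [ENNReal.tsum_eq_iSup_nat]
    exact Monotone.map_iSup_of_continuousAt ENNReal.continuous_rpow_const.continuousAt
      (ENNReal.monotone_rpow_of_nonneg hp0.le) (ENNReal.zero_rpow_of_pos hp0)
  simp_rw [hsup]
  rw [lintegral_iSup' (fun n => (Finset.aemeasurable_fun_sum _ fun j _ => hg j).pow_const p)]
  · exact iSup_le hpartial
  · exact ae_of_all _ fun a m n hmn => ENNReal.rpow_le_rpow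
      (Finset.sum_le_sum_of_subset (Finset.range_subset_range.2 hmn)) hp0.le

end Lp

theorem enorm_le_enorm_add_edist {E : Type*} [SeminormedAddCommGroup E] (a b : E) :
    ‖b‖ₑ ≤ ‖a‖ₑ + edist a b := by
  rw [← edist_zero_right, ← edist_zero_right, add_comm, edist_comm a]
  exact edist_triangle _ _ _

theorem ofReal_abs_rpow (r : ℝ) {s : ℝ} (hs : 0 ≤ s) : ENNReal.ofReal (|r| ^ s) = ‖r‖ₑ ^ s := by
  rw [Real.enorm_eq_ofReal_abs, ENNReal.ofReal_rpow_of_nonneg (abs_nonneg _) hs]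

theorem ENNReal.two_pow_mul_inv_two_pow_rpow (j : ℕ) (q : ℝ) :
    (2 : ℝ≥0∞) ^ j * ((2 ^ j)⁻¹) ^ q = (2 ^ (1 - q)) ^ j := by
  rw [← ENNReal.rpow_natCast, ← ENNReal.rpow_neg, ← ENNReal.rpow_mul, ← ENNReal.rpow_add _ _
    two_ne_zero ENNReal.ofNat_ne_top, ← ENNReal.rpow_natCast, ← ENNReal.rpow_mul]
  ring_nf

section Dyadic

variable {E : Type*} [PseudoEMetricSpace E]

noncomputable def dyadicOsc (f : ℝ → E) (a : ℝ) (j : ℕ) : ℝ≥0∞ :=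
  ⨆ k : Fin (2 ^ j), edist (f (a + k / 2 ^ j)) (f (a + (k + 1) / 2 ^ j))

theorem edist_le_dyadicOsc (f : ℝ → E) (a : ℝ) {j k : ℕ} (hk : k < 2 ^ j) :
    edist (f (a + k / 2 ^ j)) (f (a + (k + 1) / 2 ^ j)) ≤ dyadicOsc f a j :=
  le_iSup (fun k : Fin (2 ^ j) => edist (f (a + k / 2 ^ j)) (f (a + (k + 1) / 2 ^ j))) ⟨k, hk⟩

theorem edist_le_tsum_dyadicOsc {f : ℝ → E} (hf : Continuous f) {a x : ℝ}
    (hx : x ∈ Ico a (a + 1)) :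
    edist (f a) (f x) ≤ ∑' j, dyadicOsc f a j := by
  obtain ⟨hax, hxa⟩ := hx
  set t := x - a
  have ht0 : 0 ≤ t := sub_nonneg.2 hax
  set k : ℕ → ℕ := fun j => ⌊t * 2 ^ j⌋₊
  -- `y j` is the last dyadic point of level `j` not exceeding `x`; consecutive ones either
  -- coincide or are the endpoints of a dyadic interval of the next level.
  set y : ℕ → ℝ := fun j => a + k j / 2 ^ j
  have hy0 : y 0 = a := by simp [y, k, Nat.floor_eq_zero.2 (show t < 1 by linarith [hxa])]
  have hstep : ∀ j, edist (f (y j)) (f (y (j + 1))) ≤ dyadicOsc f a (j + 1) := by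
    intro j
    have hhalf : k (j + 1) / 2 = k j := by
      simp only [k, ← Nat.floor_div_ofNat, pow_succ, ← mul_assoc, mul_div_cancel_right₀ _
        (two_ne_zero' ℝ)]
    have hlt : k (j + 1) < 2 ^ (j + 1) := by
      refine (Nat.floor_lt (by positivity)).2 ?_
      push_cast
      exact mul_lt_of_lt_one_left (by positivity) (by linarith [hxa])
    have hyj : y j = a + ((2 * k j : ℕ) : ℝ) / 2 ^ (j + 1) := by
      simp only [y]; push_cast; field_simp; ring
    rcases (by omega : k (j + 1) = 2 * k j ∨ k (j + 1) = 2 * k j + 1) with h | h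
    · rw [show y (j + 1) = y j by rw [hyj]; simp only [y, h], edist_self]
      exact zero_le
    · rw [hyj, show y (j + 1) = a + (((2 * k j : ℕ) : ℝ) + 1) / 2 ^ (j + 1) by
        simp only [y, h]; push_cast; ring]
      exact edist_le_dyadicOsc f a (by omega)
  have hy : Tendsto y atTop (𝓝 x) := by
    simpa [t] using ((tendsto_nat_floor_mul_div_atTop ht0).comp
      (tendsto_pow_atTop_atTop_of_one_lt one_lt_two)).const_add a
  refine le_of_tendsto' (tendsto_const_nhds.edist ((hf.tendsto x).comp hy)) fun n => ?_
  calc edist (f a) (f (y n)) ≤ ∑ i ∈ Finset.range n, edist (f (y i)) (f (y (i + 1))) :=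
        hy0 ▸ edist_le_range_sum_edist (f ∘ y) n
    _ ≤ ∑ i ∈ Finset.range n, dyadicOsc f a (i + 1) := Finset.sum_le_sum fun i _ => hstep i
    _ ≤ ∑ i ∈ Finset.range (n + 1), dyadicOsc f a i := by
        rw [Finset.sum_range_succ']; exact le_self_add
    _ ≤ ∑' j, dyadicOsc f a j := ENNReal.sum_le_tsum _

end Dyadic

namespace ProbabilityTheory.IsKolmogorovProcess

variable {Ω E : Type*} [MeasurableSpace Ω] {P : Measure Ω} {p q : ℝ} {M : ℝ≥0}

section PseudoEMetric

variable [PseudoEMetricSpace E] {X : ℝ → Ω → E}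

theorem measurable_dyadicOsc (hX : IsKolmogorovProcess X P p q M) (a : ℝ) (j : ℕ) :
    Measurable fun ω => dyadicOsc (X · ω) a j :=
  Measurable.iSup fun _ => hX.measurable_edist

theorem measurable_tsum_dyadicOsc (hX : IsKolmogorovProcess X P p q M) (a : ℝ) :
    Measurable fun ω => ∑' j, dyadicOsc (X · ω) a j :=
  Measurable.tsum fun j => hX.measurable_dyadicOsc a j

theorem lintegral_dyadicOsc_rpow_le (hX : IsKolmogorovProcess X P p q M) (a : ℝ) (j : ℕ) :
    ∫⁻ ω, dyadicOsc (X · ω) a j ^ p ∂P ≤ M * (2 ^ (1 - q)) ^ j := by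
  have hstep : ∀ k : ℕ, edist (a + k / 2 ^ j) (a + (k + 1) / 2 ^ j) = (2 ^ j)⁻¹ := fun k => by
    rw [edist_dist, Real.dist_eq, show a + k / 2 ^ j - (a + (k + 1) / 2 ^ j) = -(2 ^ j)⁻¹ by ring,
      abs_neg, abs_of_pos (by positivity), ENNReal.ofReal_inv_of_pos (by positivity)]
    simp
  have hpt : ∀ ω, dyadicOsc (X · ω) a j ^ p
      ≤ ∑ k : Fin (2 ^ j), edist (X (a + k / 2 ^ j) ω) (X (a + (k + 1) / 2 ^ j) ω) ^ p := by
    intro ω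
    obtain ⟨k, hk⟩ := exists_eq_ciSup_of_finite (f := fun k : Fin (2 ^ j) =>
      edist (X (a + k / 2 ^ j) ω) (X (a + (k + 1) / 2 ^ j) ω))
    rw [dyadicOsc, ← hk]
    apply Finset.single_le_sum_of_canonicallyOrdered (Finset.mem_univ k)
  calc ∫⁻ ω, dyadicOsc (X · ω) a j ^ p ∂P
      ≤ ∑ k : Fin (2 ^ j), ∫⁻ ω, edist (X (a + k / 2 ^ j) ω) (X (a + (k + 1) / 2 ^ j) ω) ^ p ∂P :=
        (lintegral_mono hpt).trans_eq
          (lintegral_finsetSum _ fun _ _ => hX.measurable_edist.pow_const p)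
    _ ≤ ∑ _k : Fin (2 ^ j), M * ((2 : ℝ≥0∞) ^ j)⁻¹ ^ q :=
        Finset.sum_le_sum fun k _ => (hX.kolmogorovCondition _ _).trans_eq (by rw [hstep])
    _ = M * (2 ^ (1 - q)) ^ j := by
        rw [Finset.sum_const, Finset.card_univ, Fintype.card_fin, nsmul_eq_mul, Nat.cast_pow,
          Nat.cast_ofNat, mul_left_comm, ENNReal.two_pow_mul_inv_two_pow_rpow]

theorem exists_lintegral_tsum_dyadicOsc_rpow_le (hX : IsKolmogorovProcess X P p q M)
    (hp : 1 ≤ p) (hq : 1 < q) :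
    ∃ C ≠ ∞, ∀ a, ∫⁻ ω, (∑' j, dyadicOsc (X · ω) a j) ^ p ∂P ≤ C := by
  have hp0 : 0 < p := by linarith
  set s : ℝ≥0∞ := 2 ^ ((1 - q) / p)
  have hs : s < 1 := ENNReal.rpow_lt_one_of_one_lt_of_neg ENNReal.one_lt_two
    (div_neg_of_neg_of_pos (by linarith) hp0)
  refine ⟨((M : ℝ≥0∞) ^ (1 / p) * (1 - s)⁻¹) ^ p, ?_, fun a => ?_⟩
  · refine ENNReal.rpow_ne_top_of_nonneg hp0.le (ENNReal.mul_ne_top ?_ ?_)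
    · exact ENNReal.rpow_ne_top_of_nonneg (by positivity) ENNReal.coe_ne_top
    · exact ENNReal.inv_ne_top.2 (tsub_pos_of_lt hs).ne'
  refine (lintegral_tsum_rpow_le (fun j => (hX.measurable_dyadicOsc a j).aemeasurable) hp).trans ?_
  gcongr
  rw [← ENNReal.tsum_geometric, ← ENNReal.tsum_mul_left]
  refine ENNReal.tsum_le_tsum fun j => ?_
  calc (∫⁻ ω, dyadicOsc (X · ω) a j ^ p ∂P) ^ (1 / p) ≤ (M * (2 ^ (1 - q)) ^ j) ^ (1 / p) :=
        ENNReal.rpow_le_rpow (hX.lintegral_dyadicOsc_rpow_le a j) (by positivity)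
    _ = M ^ (1 / p) * s ^ j := by
        rw [ENNReal.mul_rpow_of_nonneg _ _ (by positivity), ← ENNReal.rpow_natCast,
          ← ENNReal.rpow_natCast, ← ENNReal.rpow_mul, ← ENNReal.rpow_mul, ← ENNReal.rpow_mul]
        ring_nf

end PseudoEMetric

section Normed

variable [SeminormedAddCommGroup E]

theorem lintegral_enorm_rpow_le {T : Type*} [PseudoEMetricSpace T] {X : T → Ω → E}
    (hX : IsKolmogorovProcess X P p q M) (hp : 1 ≤ p) (s t : T) :
    ∫⁻ ω, ‖X t ω‖ₑ ^ p ∂P ≤ 2 ^ (p - 1) * (∫⁻ ω, ‖X s ω‖ₑ ^ p ∂P + M * edist s t ^ q) := by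
  calc ∫⁻ ω, ‖X t ω‖ₑ ^ p ∂P ≤ ∫⁻ ω, (‖X s ω‖ₑ + edist (X s ω) (X t ω)) ^ p ∂P :=
        lintegral_mono fun ω => ENNReal.rpow_le_rpow (enorm_le_enorm_add_edist _ _) (by linarith)
    _ ≤ 2 ^ (p - 1) * (∫⁻ ω, ‖X s ω‖ₑ ^ p ∂P + ∫⁻ ω, edist (X s ω) (X t ω) ^ p ∂P) :=
        lintegral_add_rpow_le hX.measurable_edist.aemeasurable hp
    _ ≤ _ := by gcongr; exact hX.kolmogorovCondition s t

theorem exists_lintegral_enorm_add_tsum_dyadicOsc_rpow_le {X : ℝ → Ω → E}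
    (hX : IsKolmogorovProcess X P p q M) (hp : 1 ≤ p) (hq : 1 < q)
    (h0 : ∫⁻ ω, ‖X 0 ω‖ₑ ^ p ∂P ≠ ∞) :
    ∃ A ≠ ∞, ∃ A' ≠ ∞, ∀ a : ℝ,
      ∫⁻ ω, (‖X a ω‖ₑ + ∑' j, dyadicOsc (X · ω) a j) ^ p ∂P ≤ A + A' * ‖a‖ₑ ^ q := by
  obtain ⟨C, hC, hG⟩ := hX.exists_lintegral_tsum_dyadicOsc_rpow_le hp hq
  have h2 : (2 : ℝ≥0∞) ^ (p - 1) ≠ ∞ := ENNReal.rpow_ne_top_of_nonneg (by linarith) (by simp)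
  refine ⟨2 ^ (p - 1) * (2 ^ (p - 1) * ∫⁻ ω, ‖X 0 ω‖ₑ ^ p ∂P + C), by finiteness,
    2 ^ (p - 1) * 2 ^ (p - 1) * M, by finiteness, fun a => ?_⟩
  calc ∫⁻ ω, (‖X a ω‖ₑ + ∑' j, dyadicOsc (X · ω) a j) ^ p ∂P
      ≤ 2 ^ (p - 1) * (∫⁻ ω, ‖X a ω‖ₑ ^ p ∂P + ∫⁻ ω, (∑' j, dyadicOsc (X · ω) a j) ^ p ∂P) :=
        lintegral_add_rpow_le (hX.measurable_tsum_dyadicOsc a).aemeasurable hp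
    _ ≤ 2 ^ (p - 1) * (2 ^ (p - 1) * (∫⁻ ω, ‖X 0 ω‖ₑ ^ p ∂P + M * edist 0 a ^ q) + C) := by
        gcongr
        · exact hX.lintegral_enorm_rpow_le hp 0 a
        · exact hG a
    _ = _ := by
        rw [edist_comm, edist_zero_right]
        ring

end Normed

end ProbabilityTheory.IsKolmogorovProcess

theorem Real.rpow_le_pow_natCeil_add_one {x q : ℝ} (hx : 0 ≤ x) (hq : 0 ≤ q) :
    x ^ q ≤ x ^ ⌈q⌉₊ + 1 := by
  rcases le_or_gt 1 x with h1 | h1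
  · rw [← Real.rpow_natCast]
    exact (Real.rpow_le_rpow_of_exponent_le h1 (Nat.le_ceil q)).trans
      (le_add_of_nonneg_right zero_le_one)
  · exact (Real.rpow_le_one hx h1.le hq).trans (le_add_of_nonneg_left (by positivity))

theorem tsum_enorm_rpow_mul_exp_neg_mul_abs_lt_top {lam q : ℝ} (hlam : 0 < lam) (hq : 0 ≤ q) :
    ∑' n : ℤ, ‖(n : ℝ)‖ₑ ^ q * ENNReal.ofReal (exp (-lam * |(n : ℝ)|)) < ∞ := by
  have hnat : Summable fun n : ℕ => (n : ℝ) ^ q * exp (-lam * n) := by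
    refine ((summable_pow_mul_exp_neg_nat_mul ⌈q⌉₊ hlam).add
      (summable_pow_mul_exp_neg_nat_mul 0 hlam)).of_nonneg_of_le (fun n => by positivity)
      fun n => ?_
    rw [← add_mul, pow_zero]
    gcongr
    exact Real.rpow_le_pow_natCeil_add_one n.cast_nonneg hq
  have hint : Summable fun n : ℤ => |(n : ℝ)| ^ q * exp (-lam * |(n : ℝ)|) :=
    .of_nat_of_neg (by simpa using hnat) (by simpa using hnat)
  have hterm : ∀ n : ℤ, ‖(n : ℝ)‖ₑ ^ q * ENNReal.ofReal (exp (-lam * |(n : ℝ)|))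
      = ENNReal.ofReal (|(n : ℝ)| ^ q * exp (-lam * |(n : ℝ)|)) := fun n => by
    rw [← ofReal_abs_rpow _ hq, ENNReal.ofReal_mul (by positivity)]
  simp_rw [hterm, ← ENNReal.ofReal_tsum_of_nonneg (fun n => by positivity) hint]
  exact ENNReal.ofReal_lt_top

theorem lintegral_iSup_ofReal_mul_exp_neg_abs_lt_top {Ω : Type*} [MeasurableSpace Ω]
    {μ : Measure Ω} {F : ℝ → Ω → ℝ} {B : ℤ → Ω → ℝ≥0∞} (hB : ∀ n, AEMeasurable (B n) μ)
    (hFB : ∀ x ω, ENNReal.ofReal (F x ω) ≤ B ⌊x⌋ ω) {A A' : ℝ≥0∞} (hA : A ≠ ∞) (hA' : A' ≠ ∞)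
    {q : ℝ} (hq : 0 ≤ q) (hBint : ∀ n : ℤ, ∫⁻ ω, B n ω ∂μ ≤ A + A' * ‖(n : ℝ)‖ₑ ^ q)
    {lam : ℝ} (hlam : 0 < lam) :
    ∫⁻ ω, ⨆ x, ENNReal.ofReal (F x ω * exp (-lam * |x|)) ∂μ < ∞ := by
  set w : ℤ → ℝ≥0∞ := fun n => ENNReal.ofReal (exp (-lam * |(n : ℝ)|))
  have hpt : ∀ ω, ⨆ x, ENNReal.ofReal (F x ω * exp (-lam * |x|))
      ≤ ENNReal.ofReal (exp lam) * ∑' n, w n * B n ω := fun ω => iSup_le fun x => by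
    have hfloor : |(⌊x⌋ : ℝ)| ≤ |x| + 1 := abs_le.2
      ⟨by linarith [neg_abs_le x, Int.lt_floor_add_one x],
        by linarith [Int.floor_le x, le_abs_self x]⟩
    calc ENNReal.ofReal (F x ω * exp (-lam * |x|))
        = ENNReal.ofReal (F x ω) * ENNReal.ofReal (exp (-lam * |x|)) :=
          ENNReal.ofReal_mul' (exp_nonneg _)
      _ ≤ B ⌊x⌋ ω * (ENNReal.ofReal (exp lam) * w ⌊x⌋) := by
          gcongr
          · exact hFB x ω
          · rw [← ENNReal.ofReal_mul (exp_nonneg _), ← exp_add]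
            gcongr
            nlinarith
      _ = ENNReal.ofReal (exp lam) * (w ⌊x⌋ * B ⌊x⌋ ω) := by ring
      _ ≤ _ := by gcongr; exact ENNReal.le_tsum _
  calc ∫⁻ ω, ⨆ x, ENNReal.ofReal (F x ω * exp (-lam * |x|)) ∂μ
      ≤ ∫⁻ ω, ENNReal.ofReal (exp lam) * ∑' n, w n * B n ω ∂μ := lintegral_mono hpt
    _ = ENNReal.ofReal (exp lam) * ∑' n, w n * ∫⁻ ω, B n ω ∂μ := by
        rw [lintegral_const_mul' _ _ ENNReal.ofReal_ne_top,
          lintegral_tsum fun n => (hB n).const_mul _]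
        exact congrArg _ (tsum_congr fun n => lintegral_const_mul' _ _ ENNReal.ofReal_ne_top)
    _ ≤ ENNReal.ofReal (exp lam) * ∑' n, w n * (A + A' * ‖(n : ℝ)‖ₑ ^ q) := by
        gcongr with n; exact hBint n
    _ = ENNReal.ofReal (exp lam) * (A * ∑' n, w n + A' * ∑' n : ℤ, ‖(n : ℝ)‖ₑ ^ q * w n) := by
        rw [← ENNReal.tsum_mul_left (a := A), ← ENNReal.tsum_mul_left (a := A'), ← ENNReal.tsum_add]
        exact congrArg _ (tsum_congr fun n => by ring)
    _ < ∞ := by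
        have hw : ∑' n, w n < ∞ := by
          simpa [w] using tsum_enorm_rpow_mul_exp_neg_mul_abs_lt_top hlam le_rfl
        have hq' := tsum_enorm_rpow_mul_exp_neg_mul_abs_lt_top hlam hq
        finiteness

theorem random_field_weighted_sup_moment_general
    {Ω : Type*} [MeasurableSpace Ω] (P : Measure Ω)
    (N : ℝ → Ω → ℝ)
    (hmeas : ∀ x, Measurable (N x))
    (hcont : ∀ ω, Continuous fun x => N x ω)
    (α p K : ℝ) (hα : 0 < α) (hp : 1 < p)
    (hmom : ∀ x y : ℝ, ∫⁻ ω, ENNReal.ofReal (|N x ω - N y ω| ^ p) ∂P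
      ≤ ENNReal.ofReal (K * |x - y| ^ (1 + α)))
    (h0 : ∫⁻ ω, ENNReal.ofReal (|N 0 ω| ^ p) ∂P < ⊤)
    (lam : ℝ) (hlam : 0 < lam) :
    ∫⁻ ω, ⨆ x : ℝ, ENNReal.ofReal (|N x ω| ^ p * Real.exp (-lam * |x|)) ∂P < ⊤ := by
  have hp0 : 0 ≤ p := by linarith
  have hX : IsKolmogorovProcess N P p (1 + α) K.toNNReal := by
    refine .mk_of_secondCountableTopology hmeas (fun x y => ?_) (by linarith) (by linarith)
    simp_rw [edist_eq_enorm_sub, ← ofReal_abs_rpow _ hp0]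
    refine (hmom x y).trans_eq ?_
    rw [ENNReal.ofReal_mul' (by positivity), ofReal_abs_rpow _ (by linarith)]
    rfl
  obtain ⟨A, hA, A', hA', hB⟩ := hX.exists_lintegral_enorm_add_tsum_dyadicOsc_rpow_le hp.le
    (by linarith) (by simpa only [ofReal_abs_rpow _ hp0] using h0.ne)
  refine lintegral_iSup_ofReal_mul_exp_neg_abs_lt_top
    (B := fun n ω => (‖N n ω‖ₑ + ∑' j, dyadicOsc (N · ω) n j) ^ p)
    (fun n => (((hmeas n).enorm.add (hX.measurable_tsum_dyadicOsc n)).pow_const p).aemeasurable)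
    (fun x ω => ?_) hA hA' (by linarith) (fun n => hB n) hlam
  rw [ofReal_abs_rpow _ hp0]
  gcongr
  exact (enorm_le_enorm_add_edist _ _).trans (add_le_add_right
    (edist_le_tsum_dyadicOsc (hcont ω) ⟨Int.floor_le x, Int.lt_floor_add_one x⟩) _)

/-- Lemma 3.4: if a continuous random field `N` satisfies
`E|N(x) − N(y)|^p ≤ K|x − y|^{1+α}` with `α > 0`, `p > 1`, and `E|N(0)|^p < ∞`,
then `E[sup_x |N(x)|^p e^{−λ|x|}] < ∞` for every `λ > 0`. -/
theorem random_field_weighted_sup_moment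
    {Ω : Type*} [MeasurableSpace Ω] (P : Measure Ω) [IsProbabilityMeasure P]
    (N : ℝ → Ω → ℝ)
    (hmeas : ∀ x, Measurable (N x))
    (hcont : ∀ ω, Continuous fun x => N x ω)
    (α p K : ℝ) (hα : 0 < α) (hp : 1 < p) (hK : 0 ≤ K)
    (hmom : ∀ x y : ℝ, ∫⁻ ω, ENNReal.ofReal (|N x ω - N y ω| ^ p) ∂P
      ≤ ENNReal.ofReal (K * |x - y| ^ (1 + α)))
    (h0 : ∫⁻ ω, ENNReal.ofReal (|N 0 ω| ^ p) ∂P < ⊤)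
    (lam : ℝ) (hlam : 0 < lam) :
    ∫⁻ ω, ⨆ x : ℝ, ENNReal.ofReal (|N x ω| ^ p * Real.exp (-lam * |x|)) ∂P < ⊤ :=
  random_field_weighted_sup_moment_general P N hmeas hcont α p K hα hp hmom h0 lam hlam
end
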